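/- Completeness of S-resolution: if Pr(Q : φ) = p for an SSAT formula Q : φ with φ in CNF, then the annotated empty clause ∅^p is derivable from Q : φ by S-resolution. -/

import Mathlib

/-- A quantifier in an SSAT prefix: existential or randomized with probability `p`. -/
inductive SQ where
  | ex : SQ
  | rand : ℝ → SQ

/-- Validity of a quantifier: randomized quantifiers carry a probability `0 < p < 1`. -/
def SQ.valid : SQ → Prop
  | SQ.ex => True
  | SQ.rand p => 0 < p ∧ p < 1

open Classical in
/-- Maximum satisfaction probability of an SSAT formula, where `k` is the index of the
next variable to be bound and the matrix `φ` is a predicate on total assignments. -/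
noncomputable def PrSSAT : List SQ → ℕ → ((ℕ → Bool) → Prop) → ℝ
  | [], _, φ => if ∀ σ, φ σ then 1 else 0
  | SQ.ex :: Q, k, φ =>
      max (PrSSAT Q (k + 1) (fun σ => φ (Function.update σ k true)))
          (PrSSAT Q (k + 1) (fun σ => φ (Function.update σ k false)))
  | SQ.rand p :: Q, k, φ =>
      p * PrSSAT Q (k + 1) (fun σ => φ (Function.update σ k true))
      + (1 - p) * PrSSAT Q (k + 1) (fun σ => φ (Function.update σ k false))

/-- A (non-tautological) clause: each variable occurs at most once, with
`some true` a positive and `some false` a negative literal. -/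
abbrev Clause := ℕ → Option Bool

/-- The clause `c` is satisfied by assignment `σ`. -/
def clauseSat (c : Clause) (σ : ℕ → Bool) : Prop :=
  ∃ j : ℕ, ∃ b : Bool, c j = some b ∧ σ j = b

/-- `σ` agrees with the (unique) falsifying assignment of `c` on the variables of `c`. -/
def Falsifies (σ : ℕ → Bool) (c : Clause) : Prop :=
  ∀ j : ℕ, ∀ b : Bool, c j = some b → σ j = !b

/-- Satisfaction of a CNF, given as a list of clauses. -/
def cnfSat (φ : List Clause) (σ : ℕ → Bool) : Prop :=
  ∀ c ∈ φ, clauseSat c σ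

/-- S-resolution: derivation of annotated clauses `c^p` from the SSAT formula `Q : φ`. -/
inductive SRes (Q : List SQ) (φ : List Clause) : Clause → ℝ → Prop
  /-- R1: an original clause of `φ` is derived with annotation `0`. -/
  | orig (c : Clause) (hc : c ∈ φ) : SRes Q φ c 0
  /-- R2: if every assignment consistent with the falsifying assignment of `c`
  satisfies `φ`, then `c` is derived with annotation `1`. -/
  | sat (c : Clause)
      (hvar : ∀ j : ℕ, ∀ b : Bool, c j = some b → j < Q.length)
      (h : ∀ σ : ℕ → Bool, Falsifies σ c → cnfSat φ σ) :
      SRes Q φ c 1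
  /-- R3: resolution on the quantifier-maximal variable `x`, combining annotations
  by `max` for existential `x` and by the weighted average for randomized `x`. -/
  | res (d₁ d₂ : Clause) (p₁ p₂ : ℝ) (x : ℕ) (q : SQ) (p : ℝ)
      (h₁ : SRes Q φ d₁ p₁) (h₂ : SRes Q φ d₂ p₂)
      (hx1 : d₁ x = some false) (hx2 : d₂ x = some true)
      (hq : Q[x]? = some q)
      (hmax : ∀ j : ℕ, j ≠ x → (d₁ j ≠ none ∨ d₂ j ≠ none) → j < x)
      (hcompat : ∀ j : ℕ, j ≠ x → ∀ b : Bool, d₁ j = some b → d₂ j ≠ some (!b))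
      (hp : p = match q with
        | SQ.ex => max p₁ p₂
        | SQ.rand px => px * p₁ + (1 - px) * p₂) :
      SRes Q φ (fun j => if j = x then none else (d₁ j <|> d₂ j)) p

/-!
Completeness follows by backward induction over the prefix. For a level `k` and an assignment
`τ`, call `residualPr Q φ k τ` the value of the formula once the first `k` variables are fixed
by `τ`. We find, for every `k` and `τ`, a derivable clause over the first `k` variables, falsified
by `τ`, whose annotation is this residual value and which determines it: every assignment that
falsifies the clause has the same residual value. At level `|Q|` this is rule R2 (if `τ` satisfies
`φ`) or R1 (a clause of `φ` falsified by `τ`). Going from `k + 1` to `k`, take the clauses for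
`τ[k ↦ true]` and `τ[k ↦ false]`; if one of them avoids `x_k`, both branches have the same value
and that clause already works, otherwise they contain `¬x_k` and `x_k` respectively and rule R3
resolves them into a clause for level `k`. At level `0` the clause is empty.
-/

def SQ.combine : SQ → ℝ → ℝ → ℝ
  | SQ.ex, a, b => max a b
  | SQ.rand px, a, b => px * a + (1 - px) * b

@[simp]
lemma SQ.combine_self (q : SQ) (a : ℝ) : q.combine a a = a := by
  cases q with
  | ex => exact max_self a
  | rand px => simp only [SQ.combine]; ring

lemma PrSSAT_cons (q : SQ) (Q : List SQ) (k : ℕ) (φ : (ℕ → Bool) → Prop) :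
    PrSSAT (q :: Q) k φ = q.combine (PrSSAT Q (k + 1) (fun σ => φ (Function.update σ k true)))
      (PrSSAT Q (k + 1) (fun σ => φ (Function.update σ k false))) := by
  cases q <;> rfl

def paste (k : ℕ) (τ σ : ℕ → Bool) : ℕ → Bool := fun j => if j < k then τ j else σ j

lemma paste_update (k : ℕ) (τ σ : ℕ → Bool) (b : Bool) :
    paste k τ (Function.update σ k b) = paste (k + 1) (Function.update τ k b) σ := by
  funext j
  rcases lt_trichotomy j k with h | rfl | h
  · simp [paste, h, Nat.lt_succ_of_lt h, h.ne]
  · simp [paste]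
  · simp [paste, h.ne', not_lt.2 h.le, not_lt.2 (Nat.succ_le_of_lt h)]

lemma paste_zero (τ σ : ℕ → Bool) : paste 0 τ σ = σ := by
  funext j
  simp [paste]

noncomputable def residualPr (Q : List SQ) (φ : (ℕ → Bool) → Prop) (k : ℕ) (τ : ℕ → Bool) : ℝ :=
  PrSSAT (Q.drop k) k (fun σ => φ (paste k τ σ))

lemma residualPr_zero (Q : List SQ) (φ : (ℕ → Bool) → Prop) (τ : ℕ → Bool) :
    residualPr Q φ 0 τ = PrSSAT Q 0 φ := by
  simp only [residualPr, List.drop_zero, paste_zero]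

lemma residualPr_of_lt (Q : List SQ) (φ : (ℕ → Bool) → Prop) {k : ℕ} (hk : k < Q.length)
    (τ : ℕ → Bool) :
    residualPr Q φ k τ = Q[k].combine (residualPr Q φ (k + 1) (Function.update τ k true))
      (residualPr Q φ (k + 1) (Function.update τ k false)) := by
  simp only [residualPr, List.drop_eq_getElem_cons hk, PrSSAT_cons, paste_update]

open Classical in
lemma residualPr_length (Q : List SQ) (φ : (ℕ → Bool) → Prop)
    (hφ : ∀ σ₁ σ₂ : ℕ → Bool, (∀ j < Q.length, σ₁ j = σ₂ j) → (φ σ₁ ↔ φ σ₂)) (τ : ℕ → Bool) :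
    residualPr Q φ Q.length τ = if φ τ then 1 else 0 := by
  have hpaste : ∀ σ, φ (paste Q.length τ σ) ↔ φ τ := fun σ =>
    hφ _ _ fun j hj => if_pos hj
  simp only [residualPr, List.drop_length, PrSSAT, hpaste, forall_const]

def VarsLt (c : Clause) (n : ℕ) : Prop := ∀ j b, c j = some b → j < n

lemma falsifies_iff_not_clauseSat (σ : ℕ → Bool) (c : Clause) :
    Falsifies σ c ↔ ¬ clauseSat c σ := by
  simp only [Falsifies, clauseSat, not_exists, not_and, Bool.eq_not_iff]

lemma clauseSat_congr {c : Clause} {σ₁ σ₂ : ℕ → Bool} {n : ℕ} (hc : VarsLt c n)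
    (h : ∀ j < n, σ₁ j = σ₂ j) : clauseSat c σ₁ ↔ clauseSat c σ₂ := by
  refine exists_congr fun j => exists_congr fun b => and_congr_right fun hj => ?_
  rw [h j (hc j b hj)]

lemma cnfSat_congr {φ : List Clause} {σ₁ σ₂ : ℕ → Bool} {n : ℕ} (hφ : ∀ c ∈ φ, VarsLt c n)
    (h : ∀ j < n, σ₁ j = σ₂ j) : cnfSat φ σ₁ ↔ cnfSat φ σ₂ :=
  forall₂_congr fun c hc => clauseSat_congr (hφ c hc) h

lemma falsifies_update_iff {σ : ℕ → Bool} {c : Clause} {k : ℕ} (hk : c k = none) (b : Bool) :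
    Falsifies (Function.update σ k b) c ↔ Falsifies σ c := by
  refine forall_congr' fun j => forall₂_congr fun a hj => ?_
  rw [Function.update_of_ne (by rintro rfl; simp [hk] at hj)]

lemma Falsifies.eq_none_or_of_update {σ : ℕ → Bool} {c : Clause} {k : ℕ} {b : Bool}
    (h : Falsifies (Function.update σ k b) c) : c k = none ∨ c k = some (!b) := by
  cases hk : c k with
  | none => exact Or.inl rfl
  | some a => simpa [Bool.eq_not_iff, eq_comm] using h k a hk

def fullClause (n : ℕ) (τ : ℕ → Bool) : Clause := fun j => if j < n then some (!τ j) else none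

lemma varsLt_fullClause (n : ℕ) (τ : ℕ → Bool) : VarsLt (fullClause n τ) n := by
  intro j b hj
  by_contra h
  simp [fullClause, h] at hj

lemma falsifies_fullClause_iff {n : ℕ} {τ σ : ℕ → Bool} :
    Falsifies σ (fullClause n τ) ↔ ∀ j < n, σ j = τ j := by
  refine forall_congr' fun j => ⟨fun h hj => ?_, fun h b hb => ?_⟩
  · simpa using h (!τ j) (by simp [fullClause, hj])
  · by_cases hj : j < n
    · simp_all [fullClause]
    · simp [fullClause, hj] at hb

/-- The conclusion of rule R3. -/
def resolveOn (d₁ d₂ : Clause) (x : ℕ) : Clause := fun j => if j = x then none else (d₁ j <|> d₂ j)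

lemma resolveOn_eq_some {d₁ d₂ : Clause} {x j : ℕ} {b : Bool} (h : resolveOn d₁ d₂ x j = some b) :
    j ≠ x ∧ (d₁ j = some b ∨ d₂ j = some b) := by
  by_cases hj : j = x
  · simp [resolveOn, hj] at h
  · cases h₁ : d₁ j <;> simp_all [resolveOn]

lemma Falsifies.resolveOn_of_update {τ : ℕ → Bool} {d₁ d₂ : Clause} {x : ℕ} {b₁ b₂ : Bool}
    (h₁ : Falsifies (Function.update τ x b₁) d₁) (h₂ : Falsifies (Function.update τ x b₂) d₂) :
    Falsifies τ (resolveOn d₁ d₂ x) := by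
  intro j b hj
  obtain ⟨hjx, hj | hj⟩ := resolveOn_eq_some hj
  · simpa [Function.update_of_ne hjx] using h₁ j b hj
  · simpa [Function.update_of_ne hjx] using h₂ j b hj

lemma Falsifies.no_clash {τ : ℕ → Bool} {d₁ d₂ : Clause} {x : ℕ} {b₁ b₂ : Bool}
    (h₁ : Falsifies (Function.update τ x b₁) d₁) (h₂ : Falsifies (Function.update τ x b₂) d₂)
    {j : ℕ} (hjx : j ≠ x) {a b : Bool} (ha : d₁ j = some a) (hb : d₂ j = some b) : a = b := by
  have h₁ := h₁ j a ha
  have h₂ := h₂ j b hb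
  simp only [Function.update_of_ne hjx] at h₁ h₂
  simpa [h₁] using h₂

lemma Falsifies.update_of_resolveOn {τ τ' : ℕ → Bool} {d₁ d₂ : Clause} {x : ℕ} {b₁ b₂ : Bool}
    (h₁ : Falsifies (Function.update τ x b₁) d₁) (h₂ : Falsifies (Function.update τ x b₂) d₂)
    (h : Falsifies τ' (resolveOn d₁ d₂ x)) (hx₁ : d₁ x = some (!b₁)) (hx₂ : d₂ x = some (!b₂)) :
    Falsifies (Function.update τ' x b₁) d₁ ∧ Falsifies (Function.update τ' x b₂) d₂ := by
  constructor <;> intro j b hj <;> by_cases hjx : j = x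
  · subst hjx; simp_all
  · rw [Function.update_of_ne hjx]
    exact h j b (by simp [resolveOn, hjx, hj])
  · subst hjx; simp_all
  · rw [Function.update_of_ne hjx]
    cases ha : d₁ j with
    | none => exact h j b (by simp [resolveOn, hjx, ha, hj])
    | some a =>
      rw [← h₁.no_clash h₂ hjx ha hj]
      exact h j a (by simp [resolveOn, hjx, ha])

structure IsResidualWitness (Q : List SQ) (φ : List Clause) (k : ℕ) (τ : ℕ → Bool) (c : Clause) :
    Prop where
  varsLt : VarsLt c k
  falsifies : Falsifies τ c
  derivable : SRes Q φ c (residualPr Q (cnfSat φ) k τ)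
  determines : ∀ τ', Falsifies τ' c → residualPr Q (cnfSat φ) k τ' = residualPr Q (cnfSat φ) k τ

section Witness

variable {Q : List SQ} {φ : List Clause}

lemma exists_isResidualWitness_length (hvars : ∀ c ∈ φ, VarsLt c Q.length) (τ : ℕ → Bool) :
    ∃ c, IsResidualWitness Q φ Q.length τ c := by
  have hPr := residualPr_length Q (cnfSat φ) fun _ _ => cnfSat_congr hvars
  by_cases hsat : cnfSat φ τ
  · have hagree : ∀ τ', Falsifies τ' (fullClause Q.length τ) → cnfSat φ τ' := fun τ' h =>
      (cnfSat_congr hvars (falsifies_fullClause_iff.1 h)).2 hsat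
    refine ⟨fullClause Q.length τ, varsLt_fullClause _ _, falsifies_fullClause_iff.2 fun _ _ => rfl,
      ?_, fun τ' h => by simp [hPr, hsat, hagree τ' h]⟩
    rw [hPr, if_pos hsat]
    exact SRes.sat _ (varsLt_fullClause _ _) hagree
  · obtain ⟨c, hc, hcτ⟩ : ∃ c ∈ φ, ¬ clauseSat c τ := by simpa [cnfSat] using hsat
    have hzero : ∀ τ', Falsifies τ' c → residualPr Q (cnfSat φ) Q.length τ' = 0 := fun τ' h => by
      rw [hPr, if_neg fun hs => (falsifies_iff_not_clauseSat _ _).1 h (hs c hc)]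
    have hfal : Falsifies τ c := (falsifies_iff_not_clauseSat _ _).2 hcτ
    refine ⟨c, hvars c hc, hfal, ?_, fun τ' h => by rw [hzero τ' h, hzero τ hfal]⟩
    rw [hzero τ hfal]
    exact SRes.orig c hc

lemma IsResidualWitness.lift {k : ℕ} (hk : k < Q.length) {τ : ℕ → Bool} {b : Bool} {c : Clause}
    (hc : IsResidualWitness Q φ (k + 1) (Function.update τ k b) c) (hck : c k = none) :
    IsResidualWitness Q φ k τ c := by
  have hval : ∀ τ', Falsifies τ' c →
      residualPr Q (cnfSat φ) k τ' = residualPr Q (cnfSat φ) (k + 1) (Function.update τ k b) := by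
    intro τ' h
    rw [residualPr_of_lt _ _ hk,
      hc.determines _ ((falsifies_update_iff hck true).2 h),
      hc.determines _ ((falsifies_update_iff hck false).2 h), SQ.combine_self]
  have hfal : Falsifies τ c := (falsifies_update_iff hck b).1 hc.falsifies
  refine ⟨fun j a hj => ?_, hfal, hval τ hfal ▸ hc.derivable, fun τ' h => by
    rw [hval τ' h, hval τ hfal]⟩
  exact lt_of_le_of_ne (Nat.lt_succ_iff.1 (hc.varsLt j a hj)) (by rintro rfl; simp [hck] at hj)

lemma IsResidualWitness.resolve {k : ℕ} (hk : k < Q.length) {τ : ℕ → Bool} {c₁ c₂ : Clause}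
    (h₁ : IsResidualWitness Q φ (k + 1) (Function.update τ k true) c₁)
    (h₂ : IsResidualWitness Q φ (k + 1) (Function.update τ k false) c₂)
    (hk₁ : c₁ k = some false) (hk₂ : c₂ k = some true) :
    IsResidualWitness Q φ k τ (resolveOn c₁ c₂ k) := by
  have hvars : ∀ j, j ≠ k → (c₁ j ≠ none ∨ c₂ j ≠ none) → j < k := by
    intro j hjk hj
    refine lt_of_le_of_ne (Nat.lt_succ_iff.1 ?_) hjk
    rcases hj with hj | hj <;> obtain ⟨b, hb⟩ := Option.ne_none_iff_exists'.1 hj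
    exacts [h₁.varsLt j b hb, h₂.varsLt j b hb]
  refine ⟨fun j b hj => ?_, h₁.falsifies.resolveOn_of_update h₂.falsifies, ?_, fun τ' h => ?_⟩
  · obtain ⟨hjk, hb⟩ := resolveOn_eq_some hj
    exact hvars j hjk (hb.imp (by simp [·]) (by simp [·]))
  · -- R3's annotation is a `match` whose motive mentions `hq`, so name the quantifier first.
    obtain ⟨q, hq⟩ : ∃ q, Q[k] = q := ⟨_, rfl⟩
    have hval := residualPr_of_lt Q (cnfSat φ) hk τ
    rw [hq] at hval
    refine SRes.res c₁ c₂ _ _ k q _ h₁.derivable h₂.derivable hk₁ hk₂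
      (by rw [List.getElem?_eq_getElem hk, hq]) hvars
      (fun j hjk b hb hb' => by simpa using h₁.falsifies.no_clash h₂.falsifies hjk hb hb') ?_
    rw [hval]
    cases q <;> rfl
  · obtain ⟨h₁', h₂'⟩ := h₁.falsifies.update_of_resolveOn h₂.falsifies h hk₁ hk₂
    rw [residualPr_of_lt _ _ hk, residualPr_of_lt _ _ hk, h₁.determines _ h₁', h₂.determines _ h₂']

lemma exists_isResidualWitness_of_succ {k : ℕ} (hk : k < Q.length)
    (ih : ∀ τ, ∃ c, IsResidualWitness Q φ (k + 1) τ c) (τ : ℕ → Bool) :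
    ∃ c, IsResidualWitness Q φ k τ c := by
  obtain ⟨c₁, h₁⟩ := ih (Function.update τ k true)
  obtain ⟨c₂, h₂⟩ := ih (Function.update τ k false)
  rcases h₁.falsifies.eq_none_or_of_update with hk₁ | hk₁
  · exact ⟨c₁, h₁.lift hk hk₁⟩
  rcases h₂.falsifies.eq_none_or_of_update with hk₂ | hk₂
  · exact ⟨c₂, h₂.lift hk hk₂⟩
  exact ⟨_, h₁.resolve hk h₂ hk₁ hk₂⟩

lemma exists_isResidualWitness (hvars : ∀ c ∈ φ, VarsLt c Q.length) {k : ℕ}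
    (hk : k ≤ Q.length) : ∀ τ, ∃ c, IsResidualWitness Q φ k τ c :=
  Nat.decreasingInduction (motive := fun k _ => ∀ τ, ∃ c, IsResidualWitness Q φ k τ c)
    (fun _ hk ih => exists_isResidualWitness_of_succ hk ih)
    (exists_isResidualWitness_length hvars) hk

end Witness

lemma eq_none_of_varsLt_zero {c : Clause} (hc : VarsLt c 0) : c = fun _ => none := by
  funext j
  cases hj : c j with
  | none => rfl
  | some b => exact absurd (hc j b hj) (Nat.not_lt_zero j)

theorem sres_complete_general (Q : List SQ) (φ : List Clause) (p : ℝ)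
    (hvars : ∀ c ∈ φ, ∀ j : ℕ, ∀ b : Bool, c j = some b → j < Q.length)
    (hPr : PrSSAT Q 0 (cnfSat φ) = p) :
    SRes Q φ (fun _ => none) p := by
  obtain ⟨c, hc⟩ := exists_isResidualWitness hvars (Nat.zero_le _) (fun _ => false)
  rw [← eq_none_of_varsLt_zero hc.varsLt, ← hPr, ← residualPr_zero Q _ (fun _ => false)]
  exact hc.derivable

theorem sres_complete (Q : List SQ) (φ : List Clause) (p : ℝ)
    (hQ : ∀ q ∈ Q, q.valid)
    (hvars : ∀ c ∈ φ, ∀ j : ℕ, ∀ b : Bool, c j = some b → j < Q.length)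
    (hPr : PrSSAT Q 0 (cnfSat φ) = p) :
    SRes Q φ (fun _ => none) p :=
  sres_complete_general Q φ p hvars hPr
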